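/- Let λ > 0, let n, s be positive integers, let a_1, …, a_n be complex numbers in the upper half-plane, and let D_0, …, D_s ∈ ℂ. Define, for t ∈ ℝ, W(t) := Σ_{l=0}^{s} D_l/(iλ − t)^{l+1} and Q(t) := (τ_n(t, a)/τ_n(t, ā)) · Σ_{l=0}^{s} conj(D_l)/(−iλ − t)^{l+1}. Then ∫_{-∞}^{∞} Q(t) · conj(W(t)) dt = 0 and ∫_{-∞}^{∞} W(t) · conj(Q(t)) dt = 0. -/

import Mathlib

open MeasureTheory Complex

/-- τ_n(z, b) := ∏_{k=1}^n (z − b_k). -/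
noncomputable def tau (n : ℕ) (z : ℂ) (b : ℕ → ℂ) : ℂ :=
  ∏ k ∈ Finset.range n, (z - b k)

/-!
With S(z) := ∑_{l ≤ s} conj(D_l)/(−iλ − z)^{l+1} one has conj W(t) = S(t) for real t, so the first
integrand is the restriction to ℝ of g(z) := (τ_n(z, a)/τ_n(z, ā)) S(z)². The poles −iλ and conj(a_k)
of g lie in the open lower half-plane, and each factor (z − a_k)/(z − conj(a_k)) has modulus at most 1
on the closed upper half-plane, so g is holomorphic there and O(|z|⁻²). Cauchy's theorem on the
rectangles [−R, R] × [0, R] bounds ∫_{−R}^{R} g by O(1/R), hence ∫_ℝ g = 0. The second integral is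
the complex conjugate of the first.
-/

open Filter Set ComplexConjugate

theorem Continuous.integrable_of_norm_le_div_sq {E : Type*} [NormedAddCommGroup E]
    {f : ℝ → E} {C R₀ : ℝ} (hf : Continuous f)
    (hdecay : ∀ t : ℝ, R₀ ≤ |t| → ‖f t‖ ≤ C / t ^ 2) : Integrable f := by
  refine hf.locallyIntegrable.integrable_of_isBigO_cocompact (g := fun t : ℝ => (1 + t ^ 2)⁻¹)
    ?_ (integrable_inv_one_add_sq.integrableAtFilter _)
  refine Asymptotics.IsBigO.of_bound (2 * C) ?_
  filter_upwards [tendsto_norm_cocompact_atTop.eventually_ge_atTop (max R₀ 1)] with t ht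
  rw [Real.norm_eq_abs, max_le_iff] at ht
  have ht2 : 1 ≤ t ^ 2 := by nlinarith [sq_abs t, abs_nonneg t]
  have hft : ‖f t‖ * t ^ 2 ≤ C := (le_div_iff₀ (by positivity)).mp (hdecay t ht.1)
  rw [Real.norm_of_nonneg (by positivity), ← div_eq_mul_inv, le_div_iff₀ (by positivity)]
  nlinarith [norm_nonneg (f t)]

theorem norm_intervalIntegral_le_of_upperHalfPlane {g : ℂ → ℂ} {C R₀ R : ℝ}
    (hg : ∀ z : ℂ, 0 ≤ z.im → DifferentiableAt ℂ g z)
    (hdecay : ∀ z : ℂ, 0 ≤ z.im → R₀ ≤ ‖z‖ → ‖g z‖ ≤ C / ‖z‖ ^ 2) (hR₀ : R₀ ≤ R) (hR : 0 < R) :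
    ‖∫ x in (-R)..R, g x‖ ≤ 4 * C / R := by
  have hbound : ∀ z : ℂ, 0 ≤ z.im → R ≤ ‖z‖ → ‖g z‖ ≤ C / R ^ 2 := by
    intro z hz hRz
    have h := hdecay z hz (hR₀.trans hRz)
    have hC : 0 ≤ C := by
      have hz0 : 0 < ‖z‖ := hR.trans_le hRz
      exact (by positivity : 0 ≤ ‖g z‖ * ‖z‖ ^ 2).trans ((le_div_iff₀ (by positivity)).mp h)
    exact h.trans (by gcongr)
  have hdiff : DifferentiableOn ℂ g (uIcc (-R : ℂ).re (R + R * I : ℂ).re ×ℂ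
      uIcc (-R : ℂ).im (R + R * I : ℂ).im) := fun z hz => by
    refine (hg z ?_).differentiableWithinAt
    have := hz.2
    simp only [neg_im, ofReal_im, neg_zero, add_im, mul_im, I_re, I_im, ofReal_re, mul_zero,
      mul_one, zero_add, add_zero] at this
    exact (le_min le_rfl hR.le).trans this.1
  have hrect : (∫ x in (-R)..R, g x) - (∫ x in (-R)..R, g (x + R * I)) +
      I • (∫ y in (0 : ℝ)..R, g (R + y * I)) - I • (∫ y in (0 : ℝ)..R, g (-R + y * I)) = 0 := by
    simpa using integral_boundary_rect_eq_zero_of_differentiableOn g (-R) (R + R * I) hdiff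
  have htop : ‖∫ x in (-R)..R, g (x + R * I)‖ ≤ C / R ^ 2 * (2 * R) := by
    refine (intervalIntegral.norm_integral_le_of_norm_le_const fun x _ => hbound _ ?_ ?_).trans ?_
    · simp [hR.le]
    · exact (le_abs_self R).trans (by simpa using abs_im_le_norm (x + R * I))
    · rw [abs_of_pos (by linarith)]; linarith
  have hside : ∀ σ : ℝ, |σ| = R → ‖∫ y in (0 : ℝ)..R, g (σ + y * I)‖ ≤ C / R ^ 2 * R := by
    intro σ hσ
    refine (intervalIntegral.norm_integral_le_of_norm_le_const fun y hy => hbound _ ?_ ?_).trans ?_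
    · rw [uIoc_of_le hR.le] at hy
      simpa using hy.1.le
    · exact hσ.symm.le.trans (by simpa using abs_re_le_norm (σ + y * I))
    · rw [sub_zero, abs_of_pos hR]
  have hleft := hside (-R) (by simp [hR.le])
  push_cast at hleft
  calc ‖∫ x in (-R)..R, g x‖
      = ‖(∫ x in (-R)..R, g (x + R * I)) - I • (∫ y in (0 : ℝ)..R, g (R + y * I))
          + I • (∫ y in (0 : ℝ)..R, g (-R + y * I))‖ := by
        congr 1; linear_combination hrect
    _ ≤ C / R ^ 2 * (2 * R) + C / R ^ 2 * R + C / R ^ 2 * R := by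
        refine (norm_add_le _ _).trans (add_le_add ((norm_sub_le _ _).trans (add_le_add htop ?_)) ?_)
        · simpa [norm_smul] using hside R (abs_of_pos hR)
        · simpa [norm_smul] using hleft
    _ = 4 * C / R := by field_simp; ring

theorem integral_ofReal_eq_zero_of_upperHalfPlane {g : ℂ → ℂ} {C R₀ : ℝ}
    (hg : ∀ z : ℂ, 0 ≤ z.im → DifferentiableAt ℂ g z)
    (hdecay : ∀ z : ℂ, 0 ≤ z.im → R₀ ≤ ‖z‖ → ‖g z‖ ≤ C / ‖z‖ ^ 2) :
    ∫ t : ℝ, g t = 0 := by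
  have hcont : Continuous fun t : ℝ => g t :=
    continuous_iff_continuousAt.mpr fun t =>
      (hg t (by simp)).continuousAt.comp continuous_ofReal.continuousAt
  have hint : Integrable fun t : ℝ => g t :=
    hcont.integrable_of_norm_le_div_sq (R₀ := R₀) fun t ht => by
      simpa using hdecay t (by simp) (by simpa using ht)
  refine tendsto_nhds_unique (intervalIntegral_tendsto_integral hint tendsto_neg_atTop_atBot
    tendsto_id) (squeeze_zero_norm' ?_ ((tendsto_const_nhds (x := 4 * C)).div_atTop tendsto_id))
  filter_upwards [eventually_ge_atTop R₀, eventually_gt_atTop 0] with R hR₀ hR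
  exact norm_intervalIntegral_le_of_upperHalfPlane hg hdecay hR₀ hR

theorem norm_sub_le_norm_sub_conj {z w : ℂ} (hz : 0 ≤ z.im) (hw : 0 ≤ w.im) :
    ‖z - w‖ ≤ ‖z - conj w‖ := by
  rw [norm_def, norm_def]
  apply Real.sqrt_le_sqrt
  simp only [normSq_apply, sub_re, sub_im, conj_re, conj_im]
  nlinarith [mul_nonneg hz hw]

theorem norm_tau_div_tau_conj_le_one {n : ℕ} {z : ℂ} {a : ℕ → ℂ} (hz : 0 ≤ z.im)
    (ha : ∀ k < n, 0 ≤ (a k).im) : ‖tau n z a / tau n z (fun k => conj (a k))‖ ≤ 1 := by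
  rw [norm_div, tau, tau, norm_prod, norm_prod]
  exact div_le_one_of_le₀ (Finset.prod_le_prod (fun _ _ => norm_nonneg _)
    fun k hk => norm_sub_le_norm_sub_conj hz (ha k (Finset.mem_range.mp hk))) (by positivity)

theorem tau_ne_zero {n : ℕ} {z : ℂ} {b : ℕ → ℂ} (hb : ∀ k < n, b k ≠ z) : tau n z b ≠ 0 :=
  Finset.prod_ne_zero_iff.mpr fun k hk => sub_ne_zero.mpr (hb k (Finset.mem_range.mp hk)).symm

theorem differentiable_tau (n : ℕ) (b : ℕ → ℂ) : Differentiable ℂ fun z => tau n z b := by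
  unfold tau
  fun_prop

noncomputable def poleSum (s : ℕ) (E : ℕ → ℂ) (c z : ℂ) : ℂ :=
  ∑ l ∈ Finset.range (s + 1), E l / (c - z) ^ (l + 1)

theorem differentiableAt_poleSum {s : ℕ} {E : ℕ → ℂ} {c z : ℂ} (hz : z ≠ c) :
    DifferentiableAt ℂ (poleSum s E c) z := by
  have hcz : c - z ≠ 0 := sub_ne_zero.mpr hz.symm
  unfold poleSum
  fun_prop (disch := exact pow_ne_zero _ hcz)

theorem norm_poleSum_le {s : ℕ} {E : ℕ → ℂ} {c z : ℂ} (hz : 2 * ‖c‖ + 2 ≤ ‖z‖) :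
    ‖poleSum s E c z‖ ≤ 2 * (∑ l ∈ Finset.range (s + 1), ‖E l‖) / ‖z‖ := by
  have hcz : ‖z‖ ≤ 2 * ‖c - z‖ := by
    linarith [norm_sub_rev c z, norm_sub_norm_le z c]
  have hz0 : 0 < ‖z‖ := by linarith [norm_nonneg c]
  rw [Finset.mul_sum, Finset.sum_div]
  refine (norm_sum_le _ _).trans (Finset.sum_le_sum fun l _ => ?_)
  have hpow : ‖z‖ ≤ 2 * ‖c - z‖ ^ (l + 1) := by
    linarith [le_self_pow₀ (by linarith [norm_nonneg c] : 1 ≤ ‖c - z‖) l.add_one_ne_zero]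
  rw [norm_div, norm_pow, div_le_div_iff₀ (by linarith) hz0]
  nlinarith [norm_nonneg (E l)]

theorem conj_poleSum_ofReal (s : ℕ) (E : ℕ → ℂ) (c : ℂ) (t : ℝ) :
    conj (poleSum s E c t) = poleSum s (fun l => conj (E l)) (conj c) t := by
  simp [poleSum, map_sum]

theorem integral_tau_div_tau_conj_mul_poleSum_sq_eq_zero {n s : ℕ} {a E : ℕ → ℂ} {c : ℂ}
    (ha : ∀ k < n, 0 < (a k).im) (hc : c.im < 0) :
    ∫ t : ℝ, tau n t a / tau n t (fun k => conj (a k)) * poleSum s E c t * poleSum s E c t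
      = 0 := by
  refine integral_ofReal_eq_zero_of_upperHalfPlane
    (g := fun z => tau n z a / tau n z (fun k => conj (a k)) * poleSum s E c z * poleSum s E c z)
    (R₀ := 2 * ‖c‖ + 2)
    (C := (2 * ∑ l ∈ Finset.range (s + 1), ‖E l‖) ^ 2) (fun z hz => ?_) fun z hz hzR => ?_
  · have hzc : z ≠ c := fun h => by linarith [congrArg im h]
    have hden : tau n z (fun k => conj (a k)) ≠ 0 :=
      tau_ne_zero fun k hk h => by linarith [congrArg im h, conj_im (a k), ha k hk]
    have hS := differentiableAt_poleSum (s := s) (E := E) hzc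
    exact (((differentiable_tau n a z).div (differentiable_tau n _ z) hden).mul hS).mul hS
  · have hS := norm_poleSum_le (s := s) (E := E) hzR
    have hB := norm_tau_div_tau_conj_le_one hz fun k hk => (ha k hk).le
    rw [norm_mul, norm_mul, ← div_pow, sq]
    simpa using mul_le_mul (mul_le_mul hB hS (norm_nonneg _) zero_le_one) hS (norm_nonneg _)
      (by positivity)

theorem integral_mul_conj_eq_zero_comm {α : Type*} [MeasurableSpace α] {μ : Measure α}
    {f g : α → ℂ} (h : ∫ x, f x * conj (g x) ∂μ = 0) : ∫ x, g x * conj (f x) ∂μ = 0 := by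
  have : ∫ x, g x * conj (f x) ∂μ = conj (∫ x, f x * conj (g x) ∂μ) := by
    rw [← integral_conj]
    simp [mul_comm]
  rw [this, h, map_zero]

theorem stmt_12_general (lam : ℝ) (hlam : 0 < lam) (n s : ℕ)
    (a : ℕ → ℂ) (ha : ∀ k < n, 0 < (a k).im) (D : ℕ → ℂ) :
    (∫ t : ℝ,
        (tau n t a / tau n t (fun k => starRingEnd ℂ (a k)) *
            ∑ l ∈ Finset.range (s + 1), starRingEnd ℂ (D l) / (-(I * lam) - t) ^ (l + 1)) *
          starRingEnd ℂ (∑ l ∈ Finset.range (s + 1), D l / (I * lam - t) ^ (l + 1))) = 0 ∧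
    (∫ t : ℝ,
        (∑ l ∈ Finset.range (s + 1), D l / (I * lam - t) ^ (l + 1)) *
          starRingEnd ℂ
            (tau n t a / tau n t (fun k => starRingEnd ℂ (a k)) *
              ∑ l ∈ Finset.range (s + 1),
                starRingEnd ℂ (D l) / (-(I * lam) - t) ^ (l + 1))) = 0 := by
  have hconj : ∀ t : ℝ, conj (∑ l ∈ Finset.range (s + 1), D l / (I * lam - t) ^ (l + 1)) =
      poleSum s (fun l => conj (D l)) (-(I * lam)) t := fun t =>
    (conj_poleSum_ofReal s D (I * lam) t).trans (by rw [map_mul, conj_I, conj_ofReal, neg_mul])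
  refine ⟨?first, integral_mul_conj_eq_zero_comm ?first⟩
  simp_rw [hconj]
  exact integral_tau_div_tau_conj_mul_poleSum_sq_eq_zero ha (by simpa using hlam)

/-- With W(t) := Σ_{l=0}^s D_l/(iλ − t)^{l+1} and
Q(t) := (τ_n(t,a)/τ_n(t,ā)) Σ_{l=0}^s conj(D_l)/(−iλ − t)^{l+1},
both cross integrals ∫ Q conj(W) dt and ∫ W conj(Q) dt vanish. -/
theorem stmt_12 (lam : ℝ) (hlam : 0 < lam) (n s : ℕ) (hn : 1 ≤ n) (hs : 1 ≤ s)
    (a : ℕ → ℂ) (ha : ∀ k < n, 0 < (a k).im) (D : ℕ → ℂ) :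
    (∫ t : ℝ,
        (tau n t a / tau n t (fun k => starRingEnd ℂ (a k)) *
            ∑ l ∈ Finset.range (s + 1), starRingEnd ℂ (D l) / (-(I * lam) - t) ^ (l + 1)) *
          starRingEnd ℂ (∑ l ∈ Finset.range (s + 1), D l / (I * lam - t) ^ (l + 1))) = 0 ∧
    (∫ t : ℝ,
        (∑ l ∈ Finset.range (s + 1), D l / (I * lam - t) ^ (l + 1)) *
          starRingEnd ℂ
            (tau n t a / tau n t (fun k => starRingEnd ℂ (a k)) *
              ∑ l ∈ Finset.range (s + 1),
                starRingEnd ℂ (D l) / (-(I * lam) - t) ^ (l + 1))) = 0 :=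
  stmt_12_general lam hlam n s a ha D
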